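/- For every C > 0 there exist constants K > 0 and β₀ ∈ (0,1] such that for all α, μ with |α| ≤ C, |μ| ≤ C and all β with |β| ≤ β₀, writing ρ = e^α/(1 + e^α), one has |E[(μ + Z)·(1 + exp(α + β(μ + Z)))⁻¹] − (1 − ρ)·{μ − ρβ(μ² + E(Z²)) + ρ(ρ − ½)β²(μ³ + 3μ·E(Z²) + E(Z³))}| ≤ K|β|³. -/

import Mathlib

/-!
Since `(1 + exp y)⁻¹ = 1 - σ y` and `exp α / (1 + exp α) = σ α = ρ` for the logistic sigmoid `σ`,
the bracketed expression is `E[X · (1 - T(α + βX))]` with `X = μ + Z` and `T` the second-order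
Taylor polynomial of `σ` at `α`. As `|σ'''| ≤ 1/8`, the integrand is off by at most `|β|³ X⁴ / 8`,
and `E (μ + Z)⁴ ≤ 8 (μ⁴ + E Z⁴)` is bounded uniformly in `|μ| ≤ C`. The moments of `X` reduce to
those of `Z` because `E Z = 0`.
-/

open MeasureTheory Real

theorem abs_le_mul_abs_pow_succ_of_abs_deriv_le {g g' : ℝ → ℝ} {C : ℝ} {n : ℕ}
    (hg : ∀ s, HasDerivAt g (g' s) s) (hg0 : g 0 = 0) (hg' : ∀ s, |g' s| ≤ C * |s| ^ n)
    (t : ℝ) : |g t| ≤ C * |t| ^ (n + 1) := by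
  rcases eq_or_ne t 0 with rfl | ht
  · simp [hg0]
  have hC : 0 ≤ C := nonneg_of_mul_nonneg_left ((abs_nonneg _).trans (hg' t)) (by positivity)
  have hbound : ∀ s ∈ Set.uIcc 0 t, ‖g' s‖ ≤ C * |t| ^ n := fun s hs => by
    have hst : |s| ≤ |t| := by simpa using Set.abs_sub_left_of_mem_uIcc hs
    exact (hg' s).trans (by gcongr)
  have := (convex_uIcc 0 t).norm_image_sub_le_of_norm_hasDerivWithin_le
    (fun s _ => (hg s).hasDerivWithinAt) hbound Set.left_mem_uIcc Set.right_mem_uIcc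
  simpa [hg0, pow_succ, mul_assoc] using this

theorem abs_sub_taylor_two_le {f f' f'' f''' : ℝ → ℝ} {M : ℝ}
    (hf : ∀ x, HasDerivAt f (f' x) x) (hf' : ∀ x, HasDerivAt f' (f'' x) x)
    (hf'' : ∀ x, HasDerivAt f'' (f''' x) x) (hM : ∀ x, |f''' x| ≤ M) (a t : ℝ) :
    |f (a + t) - f a - f' a * t - f'' a / 2 * t ^ 2| ≤ M * |t| ^ 3 := by
  have shift : ∀ {φ φ' : ℝ → ℝ}, (∀ x, HasDerivAt φ (φ' x) x) →
      ∀ s, HasDerivAt (fun s => φ (a + s)) (φ' (a + s)) s :=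
    fun h s => (h (a + s)).comp_const_add a s
  have err2 : ∀ s, |f'' (a + s) - f'' a| ≤ M * |s| ^ 1 :=
    abs_le_mul_abs_pow_succ_of_abs_deriv_le (fun s => (shift hf'' s).sub_const _) (by simp)
      (by simpa using fun s => hM (a + s))
  have err1 : ∀ s, |f' (a + s) - f' a - f'' a * s| ≤ M * |s| ^ 2 :=
    abs_le_mul_abs_pow_succ_of_abs_deriv_le
      (fun s => (((shift hf' s).sub_const _).sub ((hasDerivAt_id s).const_mul _)).congr_deriv
        (by simp))
      (by simp) err2
  refine abs_le_mul_abs_pow_succ_of_abs_deriv_le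
    (g := fun s => f (a + s) - f a - f' a * s - f'' a / 2 * s ^ 2)
    (fun s => ((((shift hf s).sub_const _).sub ((hasDerivAt_id s).const_mul _)).sub
      (((hasDerivAt_id s).pow 2).const_mul _)).congr_deriv ?_) (by simp) err1 t
  simp only [mul_one, Nat.cast_ofNat, id_eq, Nat.add_one_sub_one, pow_one, sub_right_inj]
  ring

namespace Real

lemma hasDerivAt_sigmoid_mul_one_sub (x : ℝ) :
    HasDerivAt (fun y => sigmoid y * (1 - sigmoid y))
      (sigmoid x * (1 - sigmoid x) * (1 - 2 * sigmoid x)) x :=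
  ((hasDerivAt_sigmoid x).mul ((hasDerivAt_sigmoid x).const_sub 1)).congr_deriv (by ring)

lemma hasDerivAt_sigmoid_mul_one_sub_mul_one_sub_two_mul (x : ℝ) :
    HasDerivAt (fun y => sigmoid y * (1 - sigmoid y) * (1 - 2 * sigmoid y))
      (sigmoid x * (1 - sigmoid x) * (1 - 6 * sigmoid x + 6 * sigmoid x ^ 2)) x :=
  ((hasDerivAt_sigmoid_mul_one_sub x).mul
    (((hasDerivAt_sigmoid x).const_mul 2).const_sub 1)).congr_deriv (by ring)

lemma abs_sigmoid_deriv_three_le (x : ℝ) :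
    |sigmoid x * (1 - sigmoid x) * (1 - 6 * sigmoid x + 6 * sigmoid x ^ 2)| ≤ 1 / 8 := by
  have h0 := sigmoid_pos x
  have h1 := sigmoid_lt_one x
  set u := sigmoid x * (1 - sigmoid x) with hu
  have hu0 : 0 ≤ u := by positivity
  have hu1 : u ≤ 1 / 4 := by nlinarith [sq_nonneg (sigmoid x - 1 / 2)]
  have hpoly : sigmoid x * (1 - sigmoid x) * (1 - 6 * sigmoid x + 6 * sigmoid x ^ 2)
      = u * (1 - 6 * u) := by
    rw [hu]; ring
  rw [hpoly, abs_le]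
  constructor <;> nlinarith

lemma abs_sigmoid_add_sub_taylor_le (a t : ℝ) :
    |sigmoid (a + t) - sigmoid a - sigmoid a * (1 - sigmoid a) * t
      - sigmoid a * (1 - sigmoid a) * (1 - 2 * sigmoid a) / 2 * t ^ 2| ≤ 1 / 8 * |t| ^ 3 :=
  abs_sub_taylor_two_le hasDerivAt_sigmoid hasDerivAt_sigmoid_mul_one_sub
    hasDerivAt_sigmoid_mul_one_sub_mul_one_sub_two_mul abs_sigmoid_deriv_three_le a t

lemma inv_one_add_exp_eq_one_sub_sigmoid (x : ℝ) : (1 + exp x)⁻¹ = 1 - sigmoid x := by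
  rw [← sigmoid_neg, sigmoid_def, neg_neg]

lemma exp_div_one_add_exp_eq_sigmoid (x : ℝ) : exp x / (1 + exp x) = sigmoid x := by
  rw [sigmoid_def, exp_neg]
  field_simp
  ring

lemma abs_mul_inv_one_add_exp_sub_le (α β x : ℝ) :
    |x * (1 + exp (α + β * x))⁻¹ - (1 - sigmoid α) * (x - sigmoid α * β * x ^ 2
      + sigmoid α * (sigmoid α - 1 / 2) * β ^ 2 * x ^ 3)| ≤ |β| ^ 3 * x ^ 4 / 8 := by
  have habs4 : |x| ^ 4 = x ^ 4 := Even.pow_abs ⟨2, rfl⟩ x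
  calc _ = |x| * |sigmoid (α + β * x) - sigmoid α - sigmoid α * (1 - sigmoid α) * (β * x)
        - sigmoid α * (1 - sigmoid α) * (1 - 2 * sigmoid α) / 2 * (β * x) ^ 2| := by
        rw [← abs_mul, ← abs_neg, inv_one_add_exp_eq_one_sub_sigmoid]
        ring_nf
    _ ≤ |x| * (1 / 8 * |β * x| ^ 3) := by gcongr; exact abs_sigmoid_add_sub_taylor_le α (β * x)
    _ = |β| ^ 3 * x ^ 4 / 8 := by rw [abs_mul]; linear_combination |β| ^ 3 / 8 * habs4

end Real

section Moments

variable {Ω : Type*} [MeasurableSpace Ω] {P : Measure Ω}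

lemma memLp_of_integrable_pow {f : Ω → ℝ} {n : ℕ} (hn : n ≠ 0)
    (hf : AEStronglyMeasurable f P) (h : Integrable (fun ω => f ω ^ n) P) : MemLp f n P := by
  rw [← integrable_norm_rpow_iff hf (by simpa using hn) (by simp)]
  simpa [Real.rpow_natCast, norm_pow] using h.norm

lemma MeasureTheory.MemLp.integrable_pow_of_le [IsFiniteMeasure P] {f : Ω → ℝ} {p : ENNReal}
    {k : ℕ} (hf : MemLp f p P) (hk : k ≤ p) : Integrable (fun ω => f ω ^ k) P := by
  refine (integrable_norm_iff (hf.1.pow k)).1 ?_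
  simpa [norm_pow] using (hf.mono_exponent hk).integrable_norm_pow'

lemma abs_integral_mul_inv_one_add_exp_sub_le [IsFiniteMeasure P] {X : Ω → ℝ} (hX : MemLp X 4 P)
    (α β : ℝ) :
    |(∫ ω, X ω * (1 + exp (α + β * X ω))⁻¹ ∂P) - (1 - sigmoid α) * ((∫ ω, X ω ∂P)
      - sigmoid α * β * (∫ ω, X ω ^ 2 ∂P)
      + sigmoid α * (sigmoid α - 1 / 2) * β ^ 2 * (∫ ω, X ω ^ 3 ∂P))|
      ≤ |β| ^ 3 * (∫ ω, X ω ^ 4 ∂P) / 8 := by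
  have hXk : ∀ k ≤ 4, Integrable (fun ω => X ω ^ k) P := fun k hk =>
    hX.integrable_pow_of_le (mod_cast hk)
  have hX1 : Integrable X P := by simpa using hXk 1 (by norm_num)
  have hf : Integrable (fun ω => X ω * (1 + exp (α + β * X ω))⁻¹) P := by
    refine hX1.mono (by fun_prop) (ae_of_all _ fun ω => ?_)
    rw [norm_mul]
    refine mul_le_of_le_one_right (norm_nonneg _) ?_
    rw [norm_inv, Real.norm_of_nonneg (by positivity)]
    exact inv_le_one_of_one_le₀ (by linarith [exp_pos (α + β * X ω)])
  have hpoly : Integrable (fun ω => (1 - sigmoid α) * (X ω - sigmoid α * β * X ω ^ 2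
      + sigmoid α * (sigmoid α - 1 / 2) * β ^ 2 * X ω ^ 3)) P :=
    ((hX1.sub ((hXk 2 (by norm_num)).const_mul _)).add
      ((hXk 3 (by norm_num)).const_mul _)).const_mul _
  have hpoly_integral : ∫ ω, (1 - sigmoid α) * (X ω - sigmoid α * β * X ω ^ 2
      + sigmoid α * (sigmoid α - 1 / 2) * β ^ 2 * X ω ^ 3) ∂P
      = (1 - sigmoid α) * ((∫ ω, X ω ∂P) - sigmoid α * β * (∫ ω, X ω ^ 2 ∂P)
        + sigmoid α * (sigmoid α - 1 / 2) * β ^ 2 * (∫ ω, X ω ^ 3 ∂P)) := by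
    have hX2 := hXk 2 (by norm_num)
    have hX3 := hXk 3 (by norm_num)
    rw [integral_const_mul, integral_add (by fun_prop) (by fun_prop),
      integral_sub (by fun_prop) (by fun_prop), integral_const_mul, integral_const_mul]
  rw [← hpoly_integral, ← integral_sub hf hpoly, ← integral_const_mul, ← integral_div,
    ← Real.norm_eq_abs]
  refine norm_integral_le_of_norm_le (((hXk 4 le_rfl).const_mul _).div_const _)
    (ae_of_all _ fun ω => ?_)
  exact abs_mul_inv_one_add_exp_sub_le α β (X ω)

section Centered

variable [IsProbabilityMeasure P] {Z : Ω → ℝ} (μ : ℝ)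

lemma integral_const_add_of_integral_eq_zero (hZ : Integrable Z P) (hZ0 : ∫ ω, Z ω ∂P = 0) :
    ∫ ω, (μ + Z ω) ∂P = μ := by
  simp [integral_add (integrable_const μ) hZ, hZ0]

lemma integral_const_add_sq_of_integral_eq_zero (hZ : MemLp Z 2 P) (hZ0 : ∫ ω, Z ω ∂P = 0) :
    ∫ ω, (μ + Z ω) ^ 2 ∂P = μ ^ 2 + ∫ ω, Z ω ^ 2 ∂P := by
  have hZ1 : Integrable Z P := hZ.integrable (by norm_num)
  have hZ2 := hZ.integrable_pow_of_le (k := 2) (by norm_num)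
  have hexpand : (fun ω => (μ + Z ω) ^ 2) = fun ω => μ ^ 2 + 2 * μ * Z ω + Z ω ^ 2 := by
    ext; ring
  rw [hexpand, integral_add (by fun_prop) hZ2, integral_add (by fun_prop) (by fun_prop),
    integral_const_mul, hZ0]
  simp

lemma integral_const_add_pow_three_of_integral_eq_zero (hZ : MemLp Z 3 P)
    (hZ0 : ∫ ω, Z ω ∂P = 0) :
    ∫ ω, (μ + Z ω) ^ 3 ∂P = μ ^ 3 + 3 * μ * (∫ ω, Z ω ^ 2 ∂P) + ∫ ω, Z ω ^ 3 ∂P := by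
  have hZ1 : Integrable Z P := hZ.integrable (by norm_num)
  have hZ2 := hZ.integrable_pow_of_le (k := 2) (by norm_num)
  have hZ3 := hZ.integrable_pow_of_le (k := 3) (by norm_num)
  have hexpand : (fun ω => (μ + Z ω) ^ 3)
      = fun ω => μ ^ 3 + 3 * μ ^ 2 * Z ω + 3 * μ * Z ω ^ 2 + Z ω ^ 3 := by
    ext; ring
  rw [hexpand, integral_add (by fun_prop) hZ3, integral_add (by fun_prop) (by fun_prop),
    integral_add (by fun_prop) (by fun_prop), integral_const_mul, integral_const_mul, hZ0]
  simp

lemma integral_const_add_pow_four_le (hZ : Integrable (fun ω => Z ω ^ 4) P)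
    (hX : Integrable (fun ω => (μ + Z ω) ^ 4) P) :
    ∫ ω, (μ + Z ω) ^ 4 ∂P ≤ 8 * (μ ^ 4 + ∫ ω, Z ω ^ 4 ∂P) := by
  have hbound : ∀ ω, (μ + Z ω) ^ 4 ≤ 8 * (μ ^ 4 + Z ω ^ 4) := fun ω => by
    nlinarith [sq_nonneg ((μ - Z ω) ^ 2), sq_nonneg (μ ^ 2 - Z ω ^ 2)]
  calc ∫ ω, (μ + Z ω) ^ 4 ∂P ≤ ∫ ω, 8 * (μ ^ 4 + Z ω ^ 4) ∂P :=
        integral_mono hX (by fun_prop) hbound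
    _ = 8 * (μ ^ 4 + ∫ ω, Z ω ^ 4 ∂P) := by
        rw [integral_const_mul, integral_add (integrable_const _) hZ]
        simp

end Centered

end Moments

/-- Third-order expansion (6.4) of the expected weighted logistic probability
around `β = 0`, uniform over bounded `α` and `μ`: with `ρ = e^α/(1 + e^α)`,
`|E[(μ + Z)·(1 + exp(α + β(μ + Z)))⁻¹]
   − (1 − ρ)·{μ − ρβ(μ² + E Z²) + ρ(ρ − ½)β²(μ³ + 3μ·E Z² + E Z³)}| ≤ K|β|³`. -/
theorem expected_weighted_logistic_third_order_expansion
    {Ω : Type*} [MeasurableSpace Ω] (P : Measure Ω) [IsProbabilityMeasure P]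
    (Z : Ω → ℝ) (hZmeas : Measurable Z)
    (hZmom : Integrable (fun ω => (Z ω) ^ 4) P)
    (hZmean : ∫ ω, Z ω ∂P = 0) :
    ∀ C : ℝ, 0 < C →
      ∃ K : ℝ, 0 < K ∧ ∃ β₀ ∈ Set.Ioc (0 : ℝ) 1,
        ∀ α μ β : ℝ, |α| ≤ C → |μ| ≤ C → |β| ≤ β₀ →
          |(∫ ω, (μ + Z ω) * (1 + Real.exp (α + β * (μ + Z ω)))⁻¹ ∂P)
              - (1 - Real.exp α / (1 + Real.exp α))
                * (μ - (Real.exp α / (1 + Real.exp α)) * β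
                        * (μ ^ 2 + ∫ ω, (Z ω) ^ 2 ∂P)
                    + (Real.exp α / (1 + Real.exp α))
                      * (Real.exp α / (1 + Real.exp α) - 1 / 2)
                      * β ^ 2
                      * (μ ^ 3 + 3 * μ * (∫ ω, (Z ω) ^ 2 ∂P) + ∫ ω, (Z ω) ^ 3 ∂P))|
            ≤ K * |β| ^ 3 := by
  intro C hC
  have hZ : MemLp Z 4 P := by
    simpa using memLp_of_integrable_pow (n := 4) (by norm_num) hZmeas.aestronglyMeasurable hZmom
  have hm4 : 0 ≤ ∫ ω, Z ω ^ 4 ∂P := integral_nonneg fun ω => by positivity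
  refine ⟨C ^ 4 + ∫ ω, Z ω ^ 4 ∂P, by positivity, 1, ⟨one_pos, le_rfl⟩,
    fun α μ β _ hμ _ => ?_⟩
  have hX : MemLp (fun ω => μ + Z ω) 4 P := (memLp_const μ).add hZ
  have hμ4 : μ ^ 4 ≤ C ^ 4 := by
    simpa [(show Even 4 by decide).pow_abs] using pow_le_pow_left₀ (abs_nonneg μ) hμ 4
  have hexpansion := abs_integral_mul_inv_one_add_exp_sub_le hX α β
  rw [integral_const_add_of_integral_eq_zero μ (hZ.integrable (by norm_num)) hZmean,
    integral_const_add_sq_of_integral_eq_zero μ (hZ.mono_exponent (by norm_num)) hZmean,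
    integral_const_add_pow_three_of_integral_eq_zero μ (hZ.mono_exponent (by norm_num)) hZmean]
    at hexpansion
  rw [exp_div_one_add_exp_eq_sigmoid]
  calc _ ≤ _ := hexpansion
    _ ≤ |β| ^ 3 * (8 * (C ^ 4 + ∫ ω, Z ω ^ 4 ∂P)) / 8 := by
        gcongr
        exact (integral_const_add_pow_four_le μ hZmom (hX.integrable_pow_of_le (by norm_num))).trans
          (by linarith)
    _ = (C ^ 4 + ∫ ω, Z ω ^ 4 ∂P) * |β| ^ 3 := by ring
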